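/- arXiv:2604.00089 — 5 statements merged into one kernel-verified Lean document; each statement's English description precedes it below -/
import Mathlib

section
/- Let N be an SNFC channel on a finite alphabet X with support graph S_N, and let β be a natural number. Then the following are equivalent: (1) there exist an encoding P : X → Fin β and a decoder D : X × Fin β → Option X such that (conclusiveness) whenever D (y, c) = some x, every x' ∈ X with P x' = c and N y x' > 0 satisfies x' = x, and (completeness) D (x, P x) = some x for every x ∈ X; (2) there exists P : X → Fin β such that for all distinct x, x' ∈ X, P x = P x' implies N x x' = 0; (3) the chromatic number of S_N is at most β. Consequently, the minimum size of a perfect classical assisting channel achieving conclusive identification of all |X| inputs equals the chromatic number χ(S_N). -/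
/-!
Two inputs of the same colour that the channel can confuse defeat every conclusive decoder:
the uncorrupted one must be named, yet the corrupted other is consistent with the same output
and colour. Conversely, if colour classes contain no confusable pairs, the receiver may simply
name the output it sees whenever the colour matches it. So perfect codes with `β` colours are
exactly the proper `β`-colourings of the support graph.
-/

namespace ConclusiveIdentification

variable {X κ : Type*}

/-- `R y x` reads "output `y` is possible on input `x`"; the colour `P x` is sent noiselessly
alongside `x`, and `D` decodes an output together with the colour it came with. -/
def IsPerfectCode (R : X → X → Prop) (P : X → κ) (D : X × κ → Option X) : Prop :=
  (∀ (y : X) (c : κ) (x : X), D (y, c) = some x → ∀ x' : X, P x' = c → R y x' → x' = x) ∧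
    ∀ x : X, D (x, P x) = some x

def namingDecoder [DecidableEq κ] (P : X → κ) (yc : X × κ) : Option X :=
  if P yc.1 = yc.2 then some yc.1 else none

theorem exists_isPerfectCode_iff {R : X → X → Prop} {P : X → κ} :
    (∃ D, IsPerfectCode R P D) ↔ ∀ x x' : X, x ≠ x' → P x = P x' → ¬ R x x' := by
  classical
  constructor
  · rintro ⟨D, hconc, hcomp⟩ x x' hne hP hR
    exact hne (hconc x (P x) x (hcomp x) x' hP.symm hR).symm
  · intro hsep
    refine ⟨namingDecoder P, fun y c x hD x' hx' hR => ?_, fun x => if_pos rfl⟩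
    obtain ⟨hy, rfl⟩ : P y = c ∧ y = x := by
      unfold namingDecoder at hD
      split_ifs at hD with h
      exact ⟨h, Option.some_injective _ hD⟩
    by_contra hne
    exact hsep y x' (Ne.symm hne) (hy.trans hx'.symm) hR

theorem _root_.SimpleGraph.nonempty_coloring_iff_of_adj_iff {R : X → X → Prop}
    {G : SimpleGraph X} (hG : ∀ x x' : X, G.Adj x x' ↔ x ≠ x' ∧ R x' x) :
    Nonempty (G.Coloring κ) ↔ ∃ P : X → κ, ∀ x x' : X, x ≠ x' → P x = P x' → ¬ R x x' := by
  constructor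
  · rintro ⟨C⟩
    exact ⟨C, fun x x' hne hP hR => C.valid ((hG x' x).2 ⟨Ne.symm hne, hR⟩) hP.symm⟩
  · rintro ⟨P, hsep⟩
    refine ⟨SimpleGraph.Coloring.mk P fun {x x'} hadj hP => ?_⟩
    obtain ⟨hne, hR⟩ := (hG x x').1 hadj
    exact hsep x' x (Ne.symm hne) hP.symm hR

end ConclusiveIdentification

theorem stmt_1_general {X : Type*}
    (N : X → X → ℝ)
    (hnn : ∀ x y : X, 0 ≤ N y x)
    (SN : SimpleGraph X)
    (hSN : ∀ x x' : X, SN.Adj x x' ↔ (x ≠ x' ∧ 0 < N x' x)) :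
    (∀ β : ℕ,
      ((∃ (P : X → Fin β) (D : X × Fin β → Option X),
          (∀ (y : X) (c : Fin β) (x : X), D (y, c) = some x →
            ∀ x' : X, P x' = c → 0 < N y x' → x' = x) ∧
          (∀ x : X, D (x, P x) = some x)) ↔
        (∃ P : X → Fin β, ∀ x x' : X, x ≠ x' → P x = P x' → N x x' = 0)) ∧
      ((∃ P : X → Fin β, ∀ x x' : X, x ≠ x' → P x = P x' → N x x' = 0) ↔
        SN.chromaticNumber ≤ (β : ℕ∞))) ∧
    SN.chromaticNumber =
      ⨅ β ∈ {β : ℕ | ∃ (P : X → Fin β) (D : X × Fin β → Option X),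
          (∀ (y : X) (c : Fin β) (x : X), D (y, c) = some x →
            ∀ x' : X, P x' = c → 0 < N y x' → x' = x) ∧
          (∀ x : X, D (x, P x) = some x)}, (β : ℕ∞) := by
  have hzero : ∀ x x' : X, ¬ 0 < N x x' ↔ N x x' = 0 :=
    fun x x' => not_lt.trans ((LE.le.ge_iff_eq (hnn x' x)).trans eq_comm)
  have hsep : ∀ β : ℕ, ∀ P : X → Fin β, (∀ x x' : X, x ≠ x' → P x = P x' → ¬ 0 < N x x') ↔
      ∀ x x' : X, x ≠ x' → P x = P x' → N x x' = 0 := by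
    simp only [hzero, implies_true]
  have hcode := fun β : ℕ => exists_congr fun P : X → Fin β =>
    (ConclusiveIdentification.exists_isPerfectCode_iff (R := fun y x => 0 < N y x)).trans
      (hsep β P)
  have hcolour := fun β : ℕ =>
    (exists_congr fun P : X → Fin β => (hsep β P).symm).trans
      ((SN.nonempty_coloring_iff_of_adj_iff hSN).symm.trans
        SN.chromaticNumber_le_iff_colorable.symm)
  refine ⟨fun β => ⟨hcode β, hcolour β⟩, ?_⟩
  unfold SimpleGraph.chromaticNumber
  congr! 3 with β
  exact (((hcode β).trans (hcolour β)).trans SN.chromaticNumber_le_iff_colorable).symm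

/-- For an SNFC channel `N` with support graph `SN`, the following
are equivalent for every `β`: (1) existence of an encoding `P : X → Fin β` and a
conclusive and complete decoder `D`; (2) existence of `P : X → Fin β` such that
equal colors force `N x x' = 0` for distinct inputs; (3) `χ(SN) ≤ β`.
Consequently, the minimum size of a perfect classical assisting channel achieving
conclusive identification of all inputs equals the chromatic number of `SN`. -/
theorem stmt_1 {X : Type*} [Fintype X] [DecidableEq X]
    (N : X → X → ℝ)
    (hnn : ∀ x y : X, 0 ≤ N y x)
    (hsum : ∀ x : X, ∑ y, N y x = 1)
    (hsym : ∀ x y : X, N y x = 0 ↔ N x y = 0)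
    (hdiag : ∀ x : X, 0 < N x x)
    (SN : SimpleGraph X)
    (hSN : ∀ x x' : X, SN.Adj x x' ↔ (x ≠ x' ∧ 0 < N x' x)) :
    (∀ β : ℕ,
      ((∃ (P : X → Fin β) (D : X × Fin β → Option X),
          (∀ (y : X) (c : Fin β) (x : X), D (y, c) = some x →
            ∀ x' : X, P x' = c → 0 < N y x' → x' = x) ∧
          (∀ x : X, D (x, P x) = some x)) ↔
        (∃ P : X → Fin β, ∀ x x' : X, x ≠ x' → P x = P x' → N x x' = 0)) ∧
      ((∃ P : X → Fin β, ∀ x x' : X, x ≠ x' → P x = P x' → N x x' = 0) ↔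
        SN.chromaticNumber ≤ (β : ℕ∞))) ∧
    SN.chromaticNumber =
      ⨅ β ∈ {β : ℕ | ∃ (P : X → Fin β) (D : X × Fin β → Option X),
          (∀ (y : X) (c : Fin β) (x : X), D (y, c) = some x →
            ∀ x' : X, P x' = c → 0 < N y x' → x' = x) ∧
          (∀ x : X, D (x, P x) = some x)}, (β : ℕ∞) :=
  stmt_1_general N hnn SN hSN
end

section
/- Consider the nine 4-element subsets of Fin 18 given by C₁ = {1,2,3,4}, C₂ = {4,5,6,7}, C₃ = {7,8,9,10}, C₄ = {10,11,12,13}, C₅ = {13,14,15,16}, C₆ = {16,17,18,1}, C₇ = {2,9,11,18}, C₈ = {3,5,12,14}, C₉ = {6,8,15,17} (the contexts of the Cabello 18-vector Kochen–Specker system in ℂ⁴). Every element of Fin 18 belongs to exactly two of these nine contexts, and there is no function f : Fin 18 → Bool such that each of the nine contexts contains exactly one element assigned true. -/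
/-!
Each element lies in exactly two contexts, so summing the number of `true` elements over the
nine contexts counts every `true` element twice: an assignment with exactly one `true` per
context would give `9 = 2 * #{v | f v}`, which is impossible by parity.
-/

/-- The nine contexts of the Cabello 18-vector Kochen–Specker system, as subsets of
`Fin 18` (labels taken mod 18, so the label `18` is `0`). -/
def cabelloContexts : Fin 9 → Finset (Fin 18) :=
  ![{1, 2, 3, 4}, {4, 5, 6, 7}, {7, 8, 9, 10}, {10, 11, 12, 13}, {13, 14, 15, 16},
    {16, 17, 18, 1}, {2, 9, 11, 18}, {3, 5, 12, 14}, {6, 8, 15, 17}]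

open Finset

section DoubleCounting

variable {ι α : Type*} [Fintype ι] [Fintype α] [DecidableEq α]

theorem sum_card_filter_eq_mul_card_filter (C : ι → Finset α) {k : ℕ}
    (hC : ∀ v, #{j | v ∈ C j} = k) (p : α → Prop) [DecidablePred p] :
    ∑ j, #((C j).filter p) = k * #{v | p v} :=
  calc ∑ j, #((C j).filter p)
      = ∑ j, #(bipartiteAbove (fun j v => v ∈ C j) {v | p v} j) :=
        sum_congr rfl fun j _ => congrArg card (by ext v; simp [and_comm])
    _ = ∑ v ∈ {v | p v}, #{j | v ∈ C j} := sum_card_bipartiteAbove_eq_sum_card_bipartiteBelow _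
    _ = k * #{v | p v} := by rw [sum_congr rfl fun v _ => hC v, sum_const, smul_eq_mul, mul_comm]

theorem not_exists_bool_exactly_one_true_of_not_dvd (C : ι → Finset α) {k : ℕ}
    (hC : ∀ v, #{j | v ∈ C j} = k) (hk : ¬ k ∣ Fintype.card ι) :
    ¬ ∃ f : α → Bool, ∀ j, #((C j).filter (fun v => f v = true)) = 1 := by
  rintro ⟨f, hf⟩
  refine hk ⟨#{v | f v = true}, ?_⟩
  simpa [hf] using sum_card_filter_eq_mul_card_filter C hC (f · = true)

end DoubleCounting

/-- Every element of `Fin 18` belongs to exactly two of the nine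
Cabello contexts, and there is no `f : Fin 18 → Bool` assigning exactly one `true`
in each context. -/
theorem stmt_10 :
    (∀ v : Fin 18, (Finset.univ.filter (fun j : Fin 9 => v ∈ cabelloContexts j)).card = 2) ∧
    ¬ ∃ f : Fin 18 → Bool, ∀ j : Fin 9,
        ((cabelloContexts j).filter (fun v => f v = true)).card = 1 := by
  have hmem : ∀ v : Fin 18, #{j | v ∈ cabelloContexts j} = 2 := by decide
  exact ⟨hmem,
    not_exists_bool_exactly_one_true_of_not_dvd cabelloContexts hmem (by decide : ¬ 2 ∣ 9)⟩
end

section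
/- Let v₁, …, v₁₈ be the vectors in ℝ⁴ given by v₁=(1,0,0,0), v₂=(0,1,0,0), v₃=(0,0,1,1), v₄=(0,0,1,−1), v₅=(1,−1,0,0), v₆=(1,1,−1,−1), v₇=(1,1,1,1), v₈=(1,−1,1,−1), v₉=(1,0,−1,0), v₁₀=(0,1,0,−1), v₁₁=(1,0,1,0), v₁₂=(1,1,−1,1), v₁₃=(−1,1,1,1), v₁₄=(1,1,1,−1), v₁₅=(1,0,0,1), v₁₆=(0,1,−1,0), v₁₇=(0,1,1,0), v₁₈=(0,0,0,1), and let KS⁴₁₈ be the simple graph on Fin 18 in which distinct i, j are adjacent iff the dot product of vᵢ and vⱼ is 0. Then: (a) the chromatic number of KS⁴₁₈ equals 5; and (b) any two distinct vertices of KS⁴₁₈ are adjacent or have a common neighbor, i.e. KS⁴₁₈ has diameter at most 2 (and it is not complete, so its diameter is exactly 2). -/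
/-! Every one of the nine orthogonal bases in `cabelloBases` is a 4-clique, so a 4-coloring
puts exactly one vertex of color `0` into each basis. Each vector lies in exactly two bases,
so counting pairs (basis, vertex of color `0` in it) gives an even number, which is also the
number of bases, 9: the Kochen–Specker parity argument. An explicit 5-coloring gives the upper
bound, and the distance statements are finite checks. -/

/-- The orthogonality graph of a finite list of vectors in `ℝ^d`: distinct indices
are adjacent iff the corresponding vectors have dot product `0`. -/
def orthoGraph {m d : ℕ} (v : Fin m → Fin d → ℝ) : SimpleGraph (Fin m) where
  Adj i j := i ≠ j ∧ ∑ a, v i a * v j a = 0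
  symm := by
    constructor
    rintro i j ⟨hne, hdot⟩
    refine ⟨hne.symm, ?_⟩
    rw [Finset.sum_congr rfl fun a _ => mul_comm (v j a) (v i a)]
    exact hdot
  loopless := by constructor; rintro i ⟨h, -⟩; exact h rfl

/-- The 18 vectors of the Cabello–Estebaranz–García-Alcaine Kochen–Specker system in
`ℝ⁴` (index `i : Fin 18` corresponds to `v_{i+1}`). -/
def cabelloVecs : Fin 18 → Fin 4 → ℝ :=
  ![![1, 0, 0, 0], ![0, 1, 0, 0], ![0, 0, 1, 1], ![0, 0, 1, -1], ![1, -1, 0, 0],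
    ![1, 1, -1, -1], ![1, 1, 1, 1], ![1, -1, 1, -1], ![1, 0, -1, 0], ![0, 1, 0, -1],
    ![1, 0, 1, 0], ![1, 1, -1, 1], ![-1, 1, 1, 1], ![1, 1, 1, -1], ![1, 0, 0, 1],
    ![0, 1, -1, 0], ![0, 1, 1, 0], ![0, 0, 0, 1]]

open Finset

namespace SimpleGraph

variable {V : Type*} {G : SimpleGraph V}

lemma Coloring.card_filter_eq_one_of_isNClique {α : Type*} [Fintype α] [DecidableEq α]
    (C : G.Coloring α) {s : Finset V} (hs : G.IsNClique (Fintype.card α) s) (c : α) :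
    #{v ∈ s | C v = c} = 1 := by
  obtain ⟨v, hvs, hvc⟩ := C.surjOn_of_card_le_isClique hs.isClique hs.card_eq.ge (Set.mem_univ c)
  refine le_antisymm (card_le_one.2 fun a ha b hb => ?_) (card_pos.2 ⟨v, by simp_all⟩)
  simp only [mem_filter] at ha hb
  by_contra hab
  exact C.valid (hs.isClique ha.1 hb.1 hab) (ha.2.trans hb.2.symm)

theorem not_colorable_of_even_isNClique_cover [Fintype V] {ι : Type*} [Fintype ι]
    [DecidableEq V] {k : ℕ} (hk : 0 < k) (B : ι → Finset V) (hB : ∀ i, G.IsNClique k (B i))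
    (heven : ∀ v, Even #{i | v ∈ B i}) (hodd : Odd (Fintype.card ι)) : ¬ G.Colorable k := by
  rintro ⟨C⟩
  let c : Fin k := ⟨0, hk⟩
  have hone : ∀ i, #{v ∈ B i | C v = c} = 1 := fun i =>
    C.card_filter_eq_one_of_isNClique (by simpa using hB i) c
  have hcount : ∑ i, #{v ∈ B i | C v = c} = ∑ v with C v = c, #{i | v ∈ B i} := by
    convert sum_card_bipartiteAbove_eq_sum_card_bipartiteBelow (s := univ) (t := {v | C v = c})
      fun i v => v ∈ B i using 3 <;> ext <;> simp [bipartiteAbove, bipartiteBelow, and_comm]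
  simp only [hone, sum_const, card_univ, smul_eq_mul, mul_one] at hcount
  exact Nat.not_even_iff_odd.2 hodd (hcount ▸ even_sum _ fun v _ => heven v)

theorem ediam_eq_two_of_adj_or_exists_adj_adj
    (h : ∀ u v, u ≠ v → G.Adj u v ∨ ∃ w, G.Adj u w ∧ G.Adj w v)
    (hne : ∃ u v, u ≠ v ∧ ¬ G.Adj u v) : G.ediam = 2 := by
  have hcommon : ∀ u v, u ≠ v → ¬ G.Adj u v → (G.commonNeighbors u v).Nonempty := by
    intro u v huv hadj
    obtain ⟨w, huw, hwv⟩ := (h u v huv).resolve_left hadj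
    exact ⟨w, huw, hwv.symm⟩
  refine le_antisymm (ediam_le_iff.2 fun u v => not_lt.1 fun hlt => ?_) ?_
  · obtain ⟨huv, hadj, hempty⟩ := two_lt_edist_iff.1 hlt
    exact (hcommon u v huv hadj).ne_empty hempty
  · obtain ⟨u, v, huv, hadj⟩ := hne
    exact (edist_eq_two_iff.2 ⟨huv, hadj, hcommon u v huv hadj⟩).ge.trans edist_le_ediam

end SimpleGraph

lemma orthoGraph_intCast_adj_iff {m d : ℕ} (w : Fin m → Fin d → ℤ) (i j : Fin m) :
    (orthoGraph fun i a => (w i a : ℝ)).Adj i j ↔ i ≠ j ∧ ∑ a, w i a * w j a = 0 := by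
  simp only [orthoGraph]
  norm_cast

def cabelloVecsInt : Fin 18 → Fin 4 → ℤ :=
  ![![1, 0, 0, 0], ![0, 1, 0, 0], ![0, 0, 1, 1], ![0, 0, 1, -1], ![1, -1, 0, 0],
    ![1, 1, -1, -1], ![1, 1, 1, 1], ![1, -1, 1, -1], ![1, 0, -1, 0], ![0, 1, 0, -1],
    ![1, 0, 1, 0], ![1, 1, -1, 1], ![-1, 1, 1, 1], ![1, 1, 1, -1], ![1, 0, 0, 1],
    ![0, 1, -1, 0], ![0, 1, 1, 0], ![0, 0, 0, 1]]

lemma cabelloVecs_eq_intCast : cabelloVecs = fun i a => (cabelloVecsInt i a : ℝ) := by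
  funext i a
  fin_cases i <;> fin_cases a <;> norm_num [cabelloVecs, cabelloVecsInt]

-- Orthogonality of the real vectors is decided on their integer copies.
instance : DecidableRel (orthoGraph cabelloVecs).Adj := fun i j =>
  decidable_of_iff _ (by rw [cabelloVecs_eq_intCast, orthoGraph_intCast_adj_iff])

def cabelloBases : Fin 9 → Finset (Fin 18) :=
  ![{0, 1, 2, 3}, {0, 15, 16, 17}, {1, 8, 10, 17}, {2, 4, 11, 13}, {3, 4, 5, 6},
    {5, 7, 14, 16}, {6, 7, 8, 9}, {9, 10, 11, 12}, {12, 13, 14, 15}]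

lemma cabello_not_colorable_four : ¬ (orthoGraph cabelloVecs).Colorable 4 :=
  SimpleGraph.not_colorable_of_even_isNClique_cover (by norm_num) cabelloBases
    (by decide) (by decide) (by decide)

def cabelloColoring : (orthoGraph cabelloVecs).Coloring (Fin 5) :=
  SimpleGraph.Coloring.mk ![0, 1, 2, 3, 0, 1, 2, 0, 3, 1, 0, 3, 2, 1, 4, 3, 2, 4]
    fun {i j} => by revert i j; decide

/-- The orthogonality graph `KS⁴₁₈` of the 18 Cabello vectors has
chromatic number `5`; any two distinct vertices are adjacent or share a common
neighbor (diameter at most 2); and the graph is not complete (so its diameter is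
exactly 2). -/
theorem stmt_11 :
    (orthoGraph cabelloVecs).chromaticNumber = 5 ∧
    (∀ i j : Fin 18, i ≠ j →
      ((orthoGraph cabelloVecs).Adj i j ∨
        ∃ k : Fin 18, (orthoGraph cabelloVecs).Adj i k ∧ (orthoGraph cabelloVecs).Adj k j)) ∧
    (∃ i j : Fin 18, i ≠ j ∧ ¬ (orthoGraph cabelloVecs).Adj i j) ∧
    (orthoGraph cabelloVecs).ediam = 2 := by
  have hcommonNeighbor : ∀ i j : Fin 18, i ≠ j → ((orthoGraph cabelloVecs).Adj i j ∨
      ∃ k : Fin 18, (orthoGraph cabelloVecs).Adj i k ∧ (orthoGraph cabelloVecs).Adj k j) := by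
    decide
  have hnotComplete : ∃ i j : Fin 18, i ≠ j ∧ ¬ (orthoGraph cabelloVecs).Adj i j := by decide
  refine ⟨?_, hcommonNeighbor, hnotComplete,
    SimpleGraph.ediam_eq_two_of_adj_or_exists_adj_adj hcommonNeighbor hnotComplete⟩
  exact SimpleGraph.chromaticNumber_eq_iff_colorable_not_colorable.2
    ⟨cabelloColoring.colorable, cabello_not_colorable_four⟩
end

section
/- Let G and H be simple graphs, let u : V(G) → (Fin d → ℂ) assign a nonzero vector to each vertex of G with ∑_a conj (u i a) * u i' a = 0 whenever i and i' are adjacent in G, and let w : V(H) → (Fin e → ℂ) assign a nonzero vector to each vertex of H with ∑_b conj (w j b) * w j' b = 0 whenever j and j' are adjacent in H. Define v : V(G) × V(H) → (Fin d × Fin e → ℂ) by v (i, j) (a, b) = u i a * w j b. Then v (i, j) is nonzero for every (i, j), and v (i, j) is orthogonal to v (i', j') whenever (i, j) and (i', j') are adjacent in the co-normal product G × H. Consequently the orthogonal rank satisfies ξ(G × H) ≤ ξ(G) · ξ(H). -/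
/-! The inner product of two tensor vectors `f ⊗ g` and `f' ⊗ g'` is `⟨f, f'⟩ ⟨g, g'⟩`, which
vanishes as soon as one factor does; this is exactly adjacency in the co-normal product. For the
rank bound, tensor two optimal representations: these exist because the standard basis of
`ℂ^V` represents every finite graph, so the infimum defining `orthRank` is attained. -/

/-- The co-normal (disjunctive) product of two simple graphs: distinct vertices
`(i, j)` and `(i', j')` are adjacent iff `i ~ i'` in `G` or `j ~ j'` in `H`. -/
def conormalProd {α β : Type*} (G : SimpleGraph α) (H : SimpleGraph β) :
    SimpleGraph (α × β) where
  Adj x y := G.Adj x.1 y.1 ∨ H.Adj x.2 y.2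
  symm := ⟨fun _ _ h => h.imp (fun h' => h'.symm) (fun h' => h'.symm)⟩
  loopless := ⟨fun x h => h.elim (fun h' => G.irrefl h') (fun h' => H.irrefl h')⟩

/-- The (complex) orthogonal rank of a simple graph: the least `d` admitting an
assignment of nonzero vectors in `ℂ^d` to vertices with adjacent vertices receiving
orthogonal vectors. -/
noncomputable def orthRank {α : Type*} (G : SimpleGraph α) : ℕ :=
  sInf {d : ℕ | ∃ v : α → Fin d → ℂ, (∀ i, v i ≠ 0) ∧
    ∀ i j, G.Adj i j → ∑ a, (starRingEnd ℂ) (v i a) * v j a = 0}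

def IsOrthRep {α ι : Type*} [Fintype ι] (G : SimpleGraph α) (v : α → ι → ℂ) : Prop :=
  (∀ i, v i ≠ 0) ∧ ∀ i j, G.Adj i j → ∑ a, (starRingEnd ℂ) (v i a) * v j a = 0

section OrthRep

variable {α β ι κ : Type*} [Fintype ι] [Fintype κ]

lemma sum_conj_mul_tensor (f f' : ι → ℂ) (g g' : κ → ℂ) :
    ∑ ab : ι × κ, (starRingEnd ℂ) (f ab.1 * g ab.2) * (f' ab.1 * g' ab.2)
      = (∑ a, (starRingEnd ℂ) (f a) * f' a) * (∑ b, (starRingEnd ℂ) (g b) * g' b) := by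
  rw [Finset.sum_mul_sum, ← Finset.sum_product']
  refine Finset.sum_congr rfl fun ab _ => ?_
  rw [map_mul]
  ring

omit [Fintype ι] [Fintype κ] in
lemma tensor_ne_zero {f : ι → ℂ} {g : κ → ℂ} (hf : f ≠ 0) (hg : g ≠ 0) :
    (fun ab : ι × κ => f ab.1 * g ab.2) ≠ 0 := by
  obtain ⟨a, ha⟩ := Function.ne_iff.1 hf
  obtain ⟨b, hb⟩ := Function.ne_iff.1 hg
  exact Function.ne_iff.2 ⟨(a, b), mul_ne_zero ha hb⟩

lemma IsOrthRep.conormalProd {G : SimpleGraph α} {H : SimpleGraph β}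
    {u : α → ι → ℂ} {w : β → κ → ℂ} (hu : IsOrthRep G u) (hw : IsOrthRep H w) :
    IsOrthRep (conormalProd G H) fun p (ab : ι × κ) => u p.1 ab.1 * w p.2 ab.2 := by
  refine ⟨fun p => tensor_ne_zero (hu.1 p.1) (hw.1 p.2), fun p q hpq => ?_⟩
  rw [sum_conj_mul_tensor]
  rcases hpq with hG | hH
  · rw [hu.2 _ _ hG, zero_mul]
  · rw [hw.2 _ _ hH, mul_zero]

lemma IsOrthRep.comp_equiv {G : SimpleGraph α} {v : α → ι → ℂ} (hv : IsOrthRep G v)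
    (e : κ ≃ ι) : IsOrthRep G fun i => v i ∘ e := by
  refine ⟨fun i h => hv.1 i (funext fun a => by simpa using congrFun h (e.symm a)),
    fun i j hij => ?_⟩
  simpa [Function.comp_apply] using (e.sum_comp _).trans (hv.2 i j hij)

lemma IsOrthRep.orthRank_le {G : SimpleGraph α} {v : α → ι → ℂ} (hv : IsOrthRep G v) :
    orthRank G ≤ Fintype.card ι :=
  Nat.sInf_le ⟨_, hv.comp_equiv (Fintype.equivFin ι).symm⟩

lemma isOrthRep_single [Fintype α] [DecidableEq α] (G : SimpleGraph α) :
    IsOrthRep G fun i => Pi.single i 1 := by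
  refine ⟨fun i => by simp, fun i j hij => ?_⟩
  simp [Pi.single_apply, hij.ne']

lemma exists_isOrthRep_orthRank [Fintype α] (G : SimpleGraph α) :
    ∃ v : α → Fin (orthRank G) → ℂ, IsOrthRep G v := by
  classical
  exact Nat.sInf_mem (s := {d | ∃ v : α → Fin d → ℂ, IsOrthRep G v})
    ⟨_, _, (isOrthRep_single G).comp_equiv (Fintype.equivFin α).symm⟩

end OrthRep

/-- Tensoring orthogonal representations of `G` (in `ℂ^d`) and `H`
(in `ℂ^e`) yields an orthogonal representation of the co-normal product `G × H`
indexed by `Fin d × Fin e`: the product vectors are nonzero and adjacent vertices of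
`G × H` receive orthogonal vectors. Consequently `ξ(G × H) ≤ ξ(G) · ξ(H)`. -/
theorem stmt_15 {α β : Type*} [Fintype α] [Fintype β]
    (G : SimpleGraph α) (H : SimpleGraph β) (d e : ℕ)
    (u : α → Fin d → ℂ) (hu0 : ∀ i, u i ≠ 0)
    (hu : ∀ i i', G.Adj i i' → ∑ a, (starRingEnd ℂ) (u i a) * u i' a = 0)
    (w : β → Fin e → ℂ) (hw0 : ∀ j, w j ≠ 0)
    (hw : ∀ j j', H.Adj j j' → ∑ b, (starRingEnd ℂ) (w j b) * w j' b = 0)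
    (v : α × β → Fin d × Fin e → ℂ)
    (hv : ∀ p ab, v p ab = u p.1 ab.1 * w p.2 ab.2) :
    (∀ p : α × β, v p ≠ 0) ∧
    (∀ p q : α × β, (conormalProd G H).Adj p q →
      ∑ ab : Fin d × Fin e, (starRingEnd ℂ) (v p ab) * v q ab = 0) ∧
    orthRank (conormalProd G H) ≤ orthRank G * orthRank H := by
  obtain rfl : v = fun p ab => u p.1 ab.1 * w p.2 ab.2 := funext fun p => funext (hv p)
  have hprod := IsOrthRep.conormalProd ⟨hu0, hu⟩ ⟨hw0, hw⟩
  obtain ⟨u', hu'⟩ := exists_isOrthRep_orthRank G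
  obtain ⟨w', hw'⟩ := exists_isOrthRep_orthRank H
  refine ⟨hprod.1, hprod.2, ?_⟩
  simpa using (hu'.conormalProd hw').orthRank_le
end

section
/- Let d be a multiple of 4 with d > 4. Let N_d be the set of vectors x : Fin d → ℤ with every entry equal to 1 or −1 and with an even number of entries equal to −1, and let Y_d be the simple graph on N_d in which distinct x, y are adjacent iff ∑_i x i * y i = 0. Then: (a) any two distinct vertices of Y_d are adjacent or have a common neighbor; and (b) there exist two distinct nonadjacent vertices of Y_d. Hence the diameter of Y_d equals 2. -/
/-- The vertex set of the Newman graph: `±1`-vectors of length `d` with an even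
number of entries equal to `-1`. -/
def NewmanVert (d : ℕ) : Type :=
  {x : Fin d → ℤ // (∀ i, x i = 1 ∨ x i = -1) ∧
    Even ((Finset.univ.filter (fun i => x i = -1)).card)}

/-- The Newman graph `Y_d`: distinct vertices are adjacent iff the corresponding
vectors are orthogonal. -/
def newmanGraph (d : ℕ) : SimpleGraph (NewmanVert d) where
  Adj x y := x ≠ y ∧ ∑ i, x.val i * y.val i = 0
  symm := by
    constructor
    rintro x y ⟨hne, hdot⟩
    refine ⟨hne.symm, ?_⟩
    rw [Finset.sum_congr rfl fun i _ => mul_comm (y.val i) (x.val i)]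
    exact hdot
  loopless := by constructor; rintro x ⟨h, -⟩; exact h rfl

/-
Identify a vertex with its set `A` of `-1` coordinates, an even subset of `Fin d`. Then
`⟨x, y⟩ = d - 2 * #(A ∆ B)`, so `x` and `y` are adjacent iff `#(A ∆ B) = d / 2`. Given two
vertices with `#(A ∆ B) = 2 * j`, choose `S` with `#S = d / 2` meeting `A ∆ B` in exactly
`j` points: `#S` is even because `4 ∣ d`, and the vertex with negative set `A ∆ S` is adjacent
to both. The all-ones vector and a vector with two entries `-1` are not adjacent because
`d ≠ 4`.
-/

open Finset
open scoped symmDiff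

theorem SimpleGraph.ediam_eq_two_of_forall_adj_or_exists_adj_adj {V : Type*} {G : SimpleGraph V}
    (h : ∀ u v, u ≠ v → G.Adj u v ∨ ∃ w, G.Adj u w ∧ G.Adj w v)
    (hG : ∃ u v, u ≠ v ∧ ¬ G.Adj u v) : G.ediam = 2 := by
  refine le_antisymm (G.ediam_le_of_edist_le fun u v => not_lt.mp fun huv => ?_) ?_
  · obtain ⟨hne, hnadj, hempty⟩ := two_lt_edist_iff.mp huv
    obtain ⟨w, huw, hwv⟩ := (h u v hne).resolve_left hnadj
    have hw : w ∈ G.commonNeighbors u v := G.mem_commonNeighbors.mpr ⟨huw, hwv.symm⟩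
    simp [hempty] at hw
  · obtain ⟨u, v, hne, hnadj⟩ := hG
    obtain ⟨w, huw, hwv⟩ := (h u v hne).resolve_left hnadj
    have huv : G.edist u v = 2 :=
      edist_eq_two_iff.mpr ⟨hne, hnadj, w, G.mem_commonNeighbors.mpr ⟨huw, hwv.symm⟩⟩
    exact huv ▸ G.edist_le_ediam

namespace Finset

variable {α : Type*} [DecidableEq α]

theorem card_symmDiff_add_two_mul_card_inter (s t : Finset α) :
    #(s ∆ t) + 2 * #(s ∩ t) = #s + #t := by
  have hsub : s ∩ t ⊆ s ∪ t := inter_subset_union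
  have := card_union_add_card_inter s t
  have := card_le_card hsub
  rw [symmDiff_eq_sup_sdiff_inf, sup_eq_union, inf_eq_inter, card_sdiff_of_subset hsub]
  omega

theorem even_card_symmDiff {s t : Finset α} (hs : Even #s) (ht : Even #t) : Even #(s ∆ t) := by
  have := card_symmDiff_add_two_mul_card_inter s t
  rw [Nat.even_iff] at *
  omega

theorem exists_card_eq_card_inter_eq [Fintype α] {D : Finset α} {j n : ℕ} (hjD : j ≤ #D)
    (hjn : j ≤ n) (hn : n ≤ j + #Dᶜ) : ∃ S : Finset α, #S = n ∧ #(S ∩ D) = j := by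
  obtain ⟨S₁, hS₁D, hS₁⟩ := exists_subset_card_eq hjD
  obtain ⟨S₂, hS₂D, hS₂⟩ := exists_subset_card_eq (show n - j ≤ #Dᶜ by omega)
  have hS₂D' : Disjoint S₂ D := disjoint_left.mpr fun i hi => mem_compl.mp (hS₂D hi)
  refine ⟨S₁ ∪ S₂, ?_, ?_⟩
  · rw [card_union_of_disjoint (hS₂D'.symm.mono_left hS₁D), hS₁, hS₂]
    omega
  · rw [union_inter_distrib_right, inter_eq_left.mpr hS₁D,
      disjoint_iff_inter_eq_empty.mp hS₂D', union_empty, hS₁]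

end Finset

namespace NewmanGraph

variable {ι : Type*} [DecidableEq ι]

def signVec (A : Finset ι) : ι → ℤ := fun i => if i ∈ A then -1 else 1

theorem signVec_eq_one_or_neg_one (A : Finset ι) (i : ι) :
    signVec A i = 1 ∨ signVec A i = -1 := by
  unfold signVec; split_ifs <;> simp

variable [Fintype ι]

def negSet (x : ι → ℤ) : Finset ι := {i | x i = -1}

@[simp]
theorem negSet_signVec (A : Finset ι) : negSet (signVec A) = A := by
  ext i; by_cases hi : i ∈ A <;> simp [negSet, signVec, hi]

theorem sum_mul_eq_card_sub_two_mul_card_symmDiff {x y : ι → ℤ}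
    (hx : ∀ i, x i = 1 ∨ x i = -1) (hy : ∀ i, y i = 1 ∨ y i = -1) :
    ∑ i, x i * y i = Fintype.card ι - 2 * #(negSet x ∆ negSet y) := by
  have hterm : ∀ i, x i * y i = 1 - 2 * if i ∈ negSet x ∆ negSet y then 1 else 0 := by
    intro i
    rcases hx i with h₁ | h₁ <;> rcases hy i with h₂ | h₂ <;>
      simp [negSet, mem_symmDiff, h₁, h₂]
  simp only [hterm, sum_sub_distrib, ← mul_sum, sum_boole]
  simp

variable {d : ℕ}

def ofNegSet (A : Finset (Fin d)) (hA : Even #A) : NewmanVert d :=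
  ⟨signVec A, signVec_eq_one_or_neg_one A, by rw [← negSet_signVec A] at hA; exact hA⟩

@[simp]
theorem negSet_ofNegSet (A : Finset (Fin d)) (hA : Even #A) : negSet (ofNegSet A hA).1 = A :=
  negSet_signVec A

theorem even_card_negSet (x : NewmanVert d) : Even #(negSet x.1) := x.2.2

theorem newmanGraph_adj_iff (hd : 0 < d) {x y : NewmanVert d} :
    (newmanGraph d).Adj x y ↔ 2 * #(negSet x.1 ∆ negSet y.1) = d := by
  have hdot := sum_mul_eq_card_sub_two_mul_card_symmDiff x.2.1 y.2.1
  rw [Fintype.card_fin] at hdot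
  refine ⟨fun h => by have := h.2; omega, fun h => ⟨?_, by omega⟩⟩
  rintro rfl
  simp at h
  omega

theorem exists_adj_adj (hd4 : 4 ∣ d) (hd : 0 < d) (x y : NewmanVert d) :
    ∃ z, (newmanGraph d).Adj x z ∧ (newmanGraph d).Adj z y := by
  obtain ⟨m, rfl⟩ := hd4
  set D := negSet x.1 ∆ negSet y.1
  obtain ⟨j, hj⟩ : Even #D := even_card_symmDiff (even_card_negSet x) (even_card_negSet y)
  have hD : #D ≤ 4 * m := by simpa using card_le_univ D
  obtain ⟨S, hS, hSD⟩ :=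
    exists_card_eq_card_inter_eq (D := D) (j := j) (n := 2 * m) (by omega) (by omega)
      (by rw [card_compl, Fintype.card_fin]; omega)
  -- `#(S ∆ D) = #S + #D - 2 * #(S ∩ D) = 2 * m`
  have hSD' := card_symmDiff_add_two_mul_card_inter S D
  let z := ofNegSet (negSet x.1 ∆ S) (even_card_symmDiff (even_card_negSet x) ⟨m, by omega⟩)
  refine ⟨z, (newmanGraph_adj_iff hd).mpr ?_, (newmanGraph_adj_iff hd).mpr ?_⟩
  · rw [negSet_ofNegSet, symmDiff_symmDiff_cancel_left, hS]
    ring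
  · rw [negSet_ofNegSet, symmDiff_comm _ S, symmDiff_assoc]
    change 2 * #(S ∆ D) = 4 * m
    omega

theorem exists_ne_not_adj (hd2 : 2 ≤ d) (hd4 : d ≠ 4) :
    ∃ x y : NewmanVert d, x ≠ y ∧ ¬ (newmanGraph d).Adj x y := by
  let A : Finset (Fin d) := {⟨0, by omega⟩, ⟨1, by omega⟩}
  have hA : #A = 2 := card_pair (by simp [Fin.ext_iff])
  refine ⟨ofNegSet ∅ (by rw [card_empty]; exact Even.zero), ofNegSet A (hA ▸ even_two),
    fun h => ?_, ?_⟩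
  · have h' := congrArg (fun x : NewmanVert d => negSet x.1) h
    simp only [negSet_ofNegSet] at h'
    exact insert_ne_empty _ _ h'.symm
  · rw [newmanGraph_adj_iff (by omega), negSet_ofNegSet, negSet_ofNegSet, ← bot_eq_empty,
      bot_symmDiff, hA]
    omega

end NewmanGraph

open NewmanGraph in
/-- For `d` a multiple of `4` with `d > 4`: (a) any two distinct
vertices of the Newman graph `Y_d` are adjacent or have a common neighbor, and
(b) there exist two distinct nonadjacent vertices. Hence `Y_d` has diameter
exactly `2`. -/
theorem stmt_16 (d : ℕ) (hd4 : 4 ∣ d) (hd : 4 < d) :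
    (∀ x y : NewmanVert d, x ≠ y →
      ((newmanGraph d).Adj x y ∨
        ∃ z : NewmanVert d, (newmanGraph d).Adj x z ∧ (newmanGraph d).Adj z y)) ∧
    (∃ x y : NewmanVert d, x ≠ y ∧ ¬ (newmanGraph d).Adj x y) ∧
    (newmanGraph d).ediam = 2 := by
  have hdist : ∀ x y : NewmanVert d, x ≠ y →
      ((newmanGraph d).Adj x y ∨ ∃ z, (newmanGraph d).Adj x z ∧ (newmanGraph d).Adj z y) :=
    fun x y _ => Or.inr (exists_adj_adj hd4 (by omega) x y)
  have hfar := exists_ne_not_adj (d := d) (by omega) (by omega)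
  exact ⟨hdist, hfar, SimpleGraph.ediam_eq_two_of_forall_adj_or_exists_adj_adj hdist hfar⟩
end
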